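/- There is a finite-to-one map f : ℕ → ℕ such that for every minimal right ideal I of (βℕ, +), the image βf(I) is a single point of ℕ*; furthermore, for every p ∈ ℕ* there is some minimal right ideal I with βf(I) = {p}. -/

import Mathlib

open Filter Set Topology

noncomputable section

/-- `βℕ`: the space of ultrafilters on `ℕ` (the Stone–Čech compactification of `ℕ`). -/
abbrev βN := Ultrafilter ℕ

/-- `ℕ* = βℕ ∖ ℕ`: the free (nonprincipal) ultrafilters, i.e. those containing
every cofinite set. -/
def NStar : Set βN := {p | (p : Filter ℕ) ≤ Filter.cofinite}

/-- The shift map `σ : βℕ → βℕ`, the pushforward under `n ↦ n + 1`. -/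
def shift (p : βN) : βN := p.map (· + 1)

/-- Addition on `βℕ`: `A ∈ p + q ↔ {n | A − n ∈ p} ∈ q`, where `A − n = {m | m + n ∈ A}`. -/
def addU (p q : βN) : βN := q.bind fun n => p.map (· + n)

/-- A right ideal of `(βℕ, +)`: `I + βℕ ⊆ I`. -/
def IsRightIdeal (I : Set βN) : Prop := ∀ p ∈ I, ∀ q : βN, addU p q ∈ I

/-- A minimal right ideal: a nonempty right ideal not properly containing any
other (nonempty) right ideal. -/
def IsMinRightIdeal (I : Set βN) : Prop :=
  I.Nonempty ∧ IsRightIdeal I ∧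
    ∀ J : Set βN, J.Nonempty → IsRightIdeal J → J ⊆ I → J = I

/-- `A* = {p ∈ ℕ* | A ∈ p}`, as a subset of the subspace `ℕ*`. -/
def starSet (A : Set ℕ) : Set ↥NStar := {p | A ∈ (p : βN)}

/-- `F* = ⋂_{A ∈ F} A*` for a (free) filter `F` on `ℕ`. -/
def filterStar (F : Filter ℕ) : Set βN := ⋂ A ∈ F, {p : βN | A ∈ p}

/-- A closed `P`-set of the space `ℕ*`: for every countable collection of open
sets containing `X`, `X` is contained in the interior of the intersection. -/
def IsPSetSub (X : Set ↥NStar) : Prop :=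
  IsClosed X ∧ ∀ 𝒜 : Set (Set ↥NStar), 𝒜.Countable →
    (∀ U ∈ 𝒜, IsOpen U ∧ X ⊆ U) → X ⊆ interior (⋂₀ 𝒜)

/-- A subset of `βℕ` which lies in `ℕ*` and is a closed `P`-set of `ℕ*`. -/
def IsPSetIn (X : Set βN) : Prop :=
  X ⊆ NStar ∧ IsPSetSub (Subtype.val ⁻¹' X)

/-- `A ⊆ ℕ` is thick if it contains arbitrarily long intervals. -/
def Thick (A : Set ℕ) : Prop := ∀ k : ℕ, ∃ n : ℕ, Set.Icc n (n + k) ⊆ A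

/-- `A ⊆* B`: `A ∖ B` is finite. -/
def almostSub (A B : Set ℕ) : Prop := (A \ B).Finite

/-- The tower number `𝔱`: the least cardinality of a `⊆*`-chain of infinite subsets
of `ℕ` with no infinite pseudo-intersection. -/
def towerNum : Cardinal :=
  sInf {c : Cardinal | ∃ C : Set (Set ℕ), c = Cardinal.mk ↥C ∧ (∀ A ∈ C, A.Infinite) ∧
    IsChain almostSub C ∧ ¬∃ B : Set ℕ, B.Infinite ∧ ∀ A ∈ C, almostSub B A}

/-- `𝔱_Θ`: the least cardinality of a `⊆*`-chain of thick subsets of `ℕ` with no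
thick `⊆*`-lower bound. -/
def towerNumTheta : Cardinal :=
  sInf {c : Cardinal | ∃ C : Set (Set ℕ), c = Cardinal.mk ↥C ∧ (∀ A ∈ C, Thick A) ∧
    IsChain almostSub C ∧ ¬∃ B : Set ℕ, Thick B ∧ ∀ A ∈ C, almostSub B A}

/-- The pseudo-intersection number `𝔭`: the least cardinality of a filter base of
infinite subsets of `ℕ` (all finite intersections infinite) with no infinite
pseudo-intersection. -/
def pNum : Cardinal :=
  sInf {c : Cardinal | ∃ C : Set (Set ℕ), c = Cardinal.mk ↥C ∧
    (∀ S : Finset (Set ℕ), ↑S ⊆ C → (⋂ A ∈ S, A : Set ℕ).Infinite) ∧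
    ¬∃ B : Set ℕ, B.Infinite ∧ ∀ A ∈ C, almostSub B A}

/-- Chain transitivity for a dynamical system on a topological space, via open
covers: for every open cover `𝒰` and all `x, y` there is a `𝒰`-chain from `x` to `y`. -/
def ChainTransitive {X : Type*} [TopologicalSpace X] (f : X → X) : Prop :=
  ∀ 𝒰 : Set (Set X), (∀ U ∈ 𝒰, IsOpen U) → ⋃₀ 𝒰 = Set.univ →
    ∀ x y : X, ∃ (n : ℕ) (c : ℕ → X), c 0 = x ∧ c n = y ∧
      ∀ i < n, ∃ U ∈ 𝒰, f (c i) ∈ U ∧ c (i + 1) ∈ U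

lemma shift_mem_NStar {p : βN} (hp : p ∈ NStar) : shift p ∈ NStar := by
  have h1 : Filter.Tendsto (· + 1) Filter.cofinite Filter.cofinite :=
    Function.Injective.tendsto_cofinite (add_left_injective 1)
  simp only [NStar, Set.mem_setOf_eq, shift, Ultrafilter.coe_map] at *
  exact (Filter.map_mono hp).trans h1

/-- The shift map restricted to `ℕ*`. -/
def shiftStar (p : ↥NStar) : ↥NStar := ⟨shift p.1, shift_mem_NStar p.2⟩

/-
Take `f = Nat.sqrt`. It jumps only just below the squares, a set whose gaps tend to infinity.
An element `w` of a minimal right ideal `I` satisfies `w = w + q` for a free `q`, so every member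
of `w` has infinitely many translates in `w`; since two distinct translates of the jump set meet
only finitely, no translate of it lies in `w`. Hence `m ↦ √(m + n)` and `m ↦ √m` agree
`w`-almost everywhere for each `n`, so `βf (w + q) = βf w` for every `q`, and `βf` is constant on
`w + βℕ = I`. Conversely, for free `p` put `u = β(k ↦ k² + k) p`; since `√(k² + k + n) = k` for
`k ≥ n`, `βf` maps all of `u + βℕ`, and hence any minimal right ideal inside it, to `p`.
-/

lemma Ultrafilter.map_congr {α β : Type*} {f g : α → β} {u : Ultrafilter α}
    (h : f =ᶠ[u] g) : u.map f = u.map g :=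
  Ultrafilter.coe_injective (by simpa only [Ultrafilter.coe_map] using Filter.map_congr h)

lemma infinite_of_mem_NStar {p : βN} (hp : p ∈ NStar) {s : Set ℕ} (hs : s ∈ p) : s.Infinite :=
  fun hfin => (Ultrafilter.compl_mem_iff_notMem.mp (hp hfin.compl_mem_cofinite)) hs

lemma eventually_ge_of_mem_NStar {p : βN} (hp : p ∈ NStar) (n : ℕ) : {k | n ≤ k} ∈ p :=
  (hp.trans Nat.cofinite_eq_atTop.le) (eventually_ge_atTop n)

lemma map_mem_NStar {f : ℕ → ℕ} (hf : ∀ n, (f ⁻¹' {n}).Finite) {p : βN} (hp : p ∈ NStar) :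
    p.map f ∈ NStar := by
  rw [NStar, mem_ofPred_eq, Ultrafilter.coe_map]
  exact (map_mono hp).trans
    (Tendsto.cofinite_of_finite_preimage_singleton fun n => (hf n).to_subtype)

lemma mem_addU {p q : βN} {A : Set ℕ} :
    A ∈ addU p q ↔ {n | (· + n) ⁻¹' A ∈ p} ∈ q := by
  change A ∈ Filter.bind (q : Filter ℕ) (fun n => ((p.map (· + n) : βN) : Filter ℕ)) ↔ _
  rw [Filter.mem_bind']
  rfl

lemma addU_assoc (p q r : βN) : addU (addU p q) r = addU p (addU q r) := by
  ext A
  simp only [mem_addU, preimage, mem_ofPred_eq, add_assoc]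

lemma addU_mem_NStar_left {p : βN} (hp : p ∈ NStar) (q : βN) : addU p q ∈ NStar := by
  intro A hA
  have hall : ∀ n, (· + n) ⁻¹' A ∈ p := fun n =>
    hp ((add_left_injective n).tendsto_cofinite hA)
  simp only [Ultrafilter.mem_coe, mem_addU, hall, ofPred_true]
  exact univ_mem

lemma addU_mem_NStar_right {q : βN} (hq : q ∈ NStar) (p : βN) : addU p q ∈ NStar := by
  intro A hA
  obtain ⟨N, hN⟩ := (Filter.mem_cofinite.mp hA).bddAbove
  rw [Ultrafilter.mem_coe, mem_addU]
  refine mem_of_superset (eventually_ge_of_mem_NStar hq (N + 1)) fun n hn => ?_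
  have hshift : (· + n) ⁻¹' A = univ := eq_univ_of_forall fun m => by_contra fun hm => by
    have : m + n ≤ N := hN hm
    rw [mem_ofPred_eq] at hn
    omega
  rw [mem_ofPred_eq, hshift]
  exact univ_mem

lemma continuous_addU (u : βN) : Continuous (addU u) := by
  refine continuous_generateFrom_iff.mpr ?_
  rintro _ ⟨A, rfl⟩
  have hpre : addU u ⁻¹' {v | A ∈ v} = {q | {n | (· + n) ⁻¹' A ∈ u} ∈ q} := by
    ext q
    exact mem_addU
  rw [hpre]
  exact ultrafilter_isOpen_basic _

lemma isClosed_range_addU (u : βN) : IsClosed (range (addU u)) :=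
  (isCompact_range (continuous_addU u)).isClosed

lemma isRightIdeal_range_addU (u : βN) : IsRightIdeal (range (addU u)) := by
  rintro _ ⟨r, rfl⟩ s
  exact ⟨addU r s, (addU_assoc u r s).symm⟩

lemma IsMinRightIdeal.range_addU_eq {I : Set βN} (hI : IsMinRightIdeal I) {u : βN} (hu : u ∈ I) :
    range (addU u) = I :=
  hI.2.2 _ (range_nonempty _) (isRightIdeal_range_addU u) (range_subset_iff.mpr (hI.2.1 u hu))

lemma IsMinRightIdeal.exists_addU_eq_self {I : Set βN} (hI : IsMinRightIdeal I) {w : βN}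
    (hw : w ∈ I) : ∃ q ∈ NStar, addU w q = w := by
  have hfree : (hyperfilter ℕ : βN) ∈ NStar := hyperfilter_le_cofinite
  obtain ⟨s, hs⟩ : w ∈ range (addU (addU w (hyperfilter ℕ))) := by
    rwa [hI.range_addU_eq (hI.2.1 w hw _)]
  exact ⟨_, addU_mem_NStar_left hfree s, by rwa [← addU_assoc]⟩

lemma IsMinRightIdeal.subset_NStar {I : Set βN} (hI : IsMinRightIdeal I) : I ⊆ NStar := by
  intro w hw
  obtain ⟨q, hq, hwq⟩ := hI.exists_addU_eq_self hw
  exact hwq ▸ addU_mem_NStar_right hq w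

lemma exists_isMinRightIdeal_subset {R : Set βN} (hR : IsClosed R) (hne : R.Nonempty)
    (hRI : IsRightIdeal R) : ∃ M, IsMinRightIdeal M ∧ M ⊆ R := by
  set S : Set (Set βN) := {J | J ⊆ R ∧ J.Nonempty ∧ IsClosed J ∧ IsRightIdeal J}
  have hchain : ∀ c ⊆ S, IsChain (· ⊆ ·) c → c.Nonempty → ∃ lb ∈ S, ∀ s ∈ c, lb ⊆ s := by
    intro c hcS hc hcne
    have : Nonempty c := hcne.to_subtype
    obtain ⟨s, hs⟩ := hcne
    refine ⟨⋂₀ c, ⟨(sInter_subset_of_mem hs).trans (hcS hs).1, ?_, ?_, ?_⟩,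
      fun s hs => sInter_subset_of_mem hs⟩
    · have hdir : DirectedOn (· ⊇ ·) c := fun x hx y hy =>
        (hc.total hx hy).elim (fun h => ⟨x, hx, subset_rfl, h⟩) fun h => ⟨y, hy, h, subset_rfl⟩
      exact IsCompact.nonempty_sInter_of_directed_nonempty_isCompact_isClosed hdir
        (fun U hU => (hcS hU).2.1) (fun U hU => (hcS hU).2.2.1.isCompact)
        (fun U hU => (hcS hU).2.2.1)
    · exact isClosed_sInter fun U hU => (hcS hU).2.2.1
    · exact fun p hp q => mem_sInter.mpr fun U hU => (hcS hU).2.2.2 p (hp U hU) q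
  obtain ⟨M, -, hM⟩ := zorn_superset_nonempty S hchain R ⟨subset_rfl, hne, hR, hRI⟩
  obtain ⟨hMR, hMne, -, hMI⟩ := hM.prop
  refine ⟨M, ⟨hMne, hMI, fun J ⟨v, hv⟩ hJI hJM => ?_⟩, hMR⟩
  -- `M` is minimal among closed right ideals, and `J` contains the closed right ideal `v + βℕ`.
  have hvJ : range (addU v) ⊆ J := range_subset_iff.mpr (hJI v hv)
  have hvS : range (addU v) ∈ S :=
    ⟨(hvJ.trans hJM).trans hMR, range_nonempty _, isClosed_range_addU v, isRightIdeal_range_addU v⟩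
  exact hJM.antisymm ((hM.le_of_le hvS (hvJ.trans hJM)).trans hvJ)

/-- Equivalently, the gaps between consecutive elements of `D` tend to infinity. -/
def HasDivergentGaps (D : Set ℕ) : Prop := ∀ d, 0 < d → {m | m ∈ D ∧ m + d ∈ D}.Finite

lemma HasDivergentGaps.preimage_add {D : Set ℕ} (hD : HasDivergentGaps D) (n : ℕ) :
    HasDivergentGaps ((· + n) ⁻¹' D) := fun d hd =>
  ((hD d hd).preimage (add_left_injective n).injOn).subset fun m hm => by
    simpa only [mem_preimage, mem_ofPred_eq, add_right_comm m d n] using hm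

lemma IsMinRightIdeal.notMem_of_hasDivergentGaps {I : Set βN} (hI : IsMinRightIdeal I) {w : βN}
    (hw : w ∈ I) {D : Set ℕ} (hD : HasDivergentGaps D) : D ∉ w := by
  intro hDw
  obtain ⟨q, hq, hwq⟩ := hI.exists_addU_eq_self hw
  rw [← hwq, mem_addU] at hDw
  obtain ⟨n₁, hn₁, n₂, hn₂, hlt⟩ := (infinite_of_mem_NStar hq hDw).nontrivial.exists_lt
  have hfin : ((· + n₁) ⁻¹' D ∩ (· + n₂) ⁻¹' D).Finite := by
    refine (hD (n₂ - n₁) (by omega)).preimage (add_left_injective n₁).injOn |>.subset ?_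
    rintro m ⟨hm₁, hm₂⟩
    exact ⟨hm₁, by simpa only [mem_preimage, add_assoc, Nat.add_sub_cancel' hlt.le] using hm₂⟩
  exact infinite_of_mem_NStar (hI.subset_NStar hw) (inter_mem hn₁ hn₂) hfin

lemma sqrt_mul_self_of_sqrt_succ_ne {m : ℕ} (h : Nat.sqrt (m + 1) ≠ Nat.sqrt m) :
    Nat.sqrt (m + 1) * Nat.sqrt (m + 1) = m + 1 := by
  have hlt : m < Nat.sqrt (m + 1) * Nat.sqrt (m + 1) :=
    Nat.sqrt_lt.mp ((Nat.sqrt_le_sqrt m.le_succ).lt_of_ne h.symm)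
  have := Nat.sqrt_le (m + 1)
  omega

lemma hasDivergentGaps_sqrt_jumps : HasDivergentGaps {m | Nat.sqrt (m + 1) ≠ Nat.sqrt m} := by
  intro d hd
  refine (finite_Iio (d * d)).subset ?_
  rintro m ⟨hm, hmd⟩
  have hj := sqrt_mul_self_of_sqrt_succ_ne hm
  have hk := sqrt_mul_self_of_sqrt_succ_ne hmd
  set j := Nat.sqrt (m + 1)
  set k := Nat.sqrt (m + d + 1)
  -- Consecutive squares `j² < k²` differ by at least `2j + 1`, so `d > 2j`.
  have hjk : j + 1 ≤ k := Nat.mul_self_lt_mul_self_iff.mp (by omega)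
  have : (j + 1) * (j + 1) ≤ k * k := Nat.mul_self_le_mul_self hjk
  rw [mem_Iio]
  nlinarith

lemma map_addU_eq_of_forall_map_add {α : Type*} {f : ℕ → α} {w : βN}
    (h : ∀ n, w.map (fun m => f (m + n)) = w.map f) (q : βN) : (addU w q).map f = w.map f := by
  ext A
  have hshift : ∀ n, (· + n) ⁻¹' (f ⁻¹' A) ∈ w ↔ f ⁻¹' A ∈ w := fun n => by
    rw [← Ultrafilter.mem_map (m := f), ← h n]
    rfl
  rw [Ultrafilter.mem_map, Ultrafilter.mem_map, mem_addU]
  simp only [hshift]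
  by_cases hA : f ⁻¹' A ∈ w
  · simp only [hA, ofPred_true, iff_true]
    exact univ_mem
  · simp [hA]

lemma IsMinRightIdeal.map_sqrt_add {I : Set βN} (hI : IsMinRightIdeal I) {w : βN} (hw : w ∈ I)
    (n : ℕ) : w.map (fun m => Nat.sqrt (m + n)) = w.map Nat.sqrt := by
  induction n with
  | zero => rfl
  | succ n ih =>
    rw [← ih]
    refine Ultrafilter.map_congr ?_
    have hjumps := hI.notMem_of_hasDivergentGaps hw (hasDivergentGaps_sqrt_jumps.preimage_add n)
    filter_upwards [Ultrafilter.compl_mem_iff_notMem.mpr hjumps] with m hm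
    simpa only [mem_compl_iff, mem_preimage, mem_ofPred_eq, not_not, ← add_assoc] using hm

lemma IsMinRightIdeal.map_sqrt_addU {I : Set βN} (hI : IsMinRightIdeal I) {w : βN} (hw : w ∈ I)
    (q : βN) : (addU w q).map Nat.sqrt = w.map Nat.sqrt :=
  map_addU_eq_of_forall_map_add (hI.map_sqrt_add hw) q

lemma map_sqrt_add_map_mul_self_add {p : βN} (hp : p ∈ NStar) (n : ℕ) :
    (p.map fun k => k * k + k).map (fun m => Nat.sqrt (m + n)) = p := by
  rw [Ultrafilter.map_map]
  conv_rhs => rw [← p.map_id]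
  refine Ultrafilter.map_congr ?_
  filter_upwards [eventually_ge_of_mem_NStar hp n] with k hk
  show Nat.sqrt (k * k + k + n) = k
  rw [add_assoc]
  exact Nat.sqrt_add_eq k (by omega)

lemma map_sqrt_addU_map_mul_self_add {p : βN} (hp : p ∈ NStar) (r : βN) :
    (addU (p.map fun k => k * k + k) r).map Nat.sqrt = p := by
  rw [map_addU_eq_of_forall_map_add fun n => ?_]
  · exact map_sqrt_add_map_mul_self_add hp 0
  · rw [map_sqrt_add_map_mul_self_add hp n]
    exact (map_sqrt_add_map_mul_self_add hp 0).symm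

lemma finite_sqrt_preimage_singleton (n : ℕ) : (Nat.sqrt ⁻¹' {n}).Finite :=
  (finite_Iio ((n + 1) * (n + 1))).subset fun _ hm =>
    Nat.sqrt_lt.mp ((mem_singleton_iff.mp hm).trans_lt n.lt_succ_self)

/-- There is a finite-to-one `f : ℕ → ℕ` such that `βf` collapses
every minimal right ideal of `(βℕ, +)` to a single point of `ℕ*`; moreover every
point of `ℕ*` arises this way from some minimal right ideal. -/
theorem stmt7 : ∃ f : ℕ → ℕ, (∀ n : ℕ, (f ⁻¹' {n}).Finite) ∧
    (∀ I : Set βN, IsMinRightIdeal I →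
      ∃ p : βN, p ∈ NStar ∧ Ultrafilter.map f '' I = {p}) ∧
    (∀ p : βN, p ∈ NStar →
      ∃ I : Set βN, IsMinRightIdeal I ∧ Ultrafilter.map f '' I = {p}) := by
  refine ⟨Nat.sqrt, finite_sqrt_preimage_singleton, fun I hI => ?_, fun p hp => ?_⟩
  · obtain ⟨u, hu⟩ := hI.1
    refine ⟨u.map Nat.sqrt, map_mem_NStar finite_sqrt_preimage_singleton (hI.subset_NStar hu), ?_⟩
    rw [← hI.range_addU_eq hu, ← range_comp, Function.comp_def]
    simp only [hI.map_sqrt_addU hu, range_const]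
  · set u : βN := p.map fun k => k * k + k
    obtain ⟨M, hM, hMu⟩ := exists_isMinRightIdeal_subset (isClosed_range_addU u)
      (range_nonempty _) (isRightIdeal_range_addU u)
    have hMp : ∀ w ∈ M, w.map Nat.sqrt = p := fun w hw => by
      obtain ⟨r, rfl⟩ := hMu hw
      exact map_sqrt_addU_map_mul_self_add hp r
    exact ⟨M, hM, (image_congr hMp).trans (hM.1.image_const p)⟩

end
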